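/- Let d ≥ 2, L > 0, let f : ℝ^{d−1} → ℝ be a convex L-Lipschitz function (with respect to the Euclidean norm), and let U = {(y, t) ∈ ℝ^{d−1} × ℝ : t ≥ f(y)} be its epigraph. Let q̂ ∈ ℝ^{d−1}, q = (q̂, f(q̂)), let h be a supporting hyperplane of U at q, and let ε > 0. Then every point of h whose vertical projection lies within Euclidean distance ε/(2L) of q̂ belongs to closure(conv(U ∪ {q − ε e_d})); in particular, the closed ball of radius ε/(2L) centered at q̂ is contained in π(h ∩ closure(conv(U ∪ {q − ε e_d}))). -/

import Mathlib

/-!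
A supporting hyperplane at `q = (q̂, f q̂)` is the graph of an affine minorant of `f` touching
it at `q̂`; its slope `a` satisfies `‖a‖ ≤ L`, so above the ball of radius `r` around `q̂` the
hyperplane stays above height `f q̂ - L r`. For `r < ε / (2L)` the ray from `q - ε e_d` through
such a point rises fast enough to enter the epigraph once stretched by `ε / (ε - 2 L r)`, which
puts the point in the convex hull; the boundary radius `r = ε / (2L)` is reached in the closure
by approaching along the segment from `q`.
-/

open MeasureTheory Metric Set
open scoped RealInnerProductSpace ENNReal

noncomputable section

/-- Vertical projection `ℝ^d = ℝ^{d-1} × ℝ → ℝ^{d-1}` (forget the last coordinate). -/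
def vproj (n : ℕ) (x : EuclideanSpace ℝ (Fin (n + 1))) : EuclideanSpace ℝ (Fin n) :=
  WithLp.toLp 2 fun j => x j.castSucc

/-- Lift `y ∈ ℝ^{d-1}` and `t ∈ ℝ` to the point `(y, t) ∈ ℝ^d`. -/
def vlift (n : ℕ) (y : EuclideanSpace ℝ (Fin n)) (t : ℝ) : EuclideanSpace ℝ (Fin (n + 1)) :=
  WithLp.toLp 2 fun i => if h : (i : ℕ) < n then y ⟨i, h⟩ else t

/-- The last standard basis vector `e_d` of `ℝ^d` (`d = n + 1`). -/
def ed (n : ℕ) : EuclideanSpace ℝ (Fin (n + 1)) := EuclideanSpace.single (Fin.last n) 1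

/-- The epigraph of `f : ℝ^{d-1} → ℝ` as a subset of `ℝ^d`. -/
def epigraphSet (n : ℕ) (f : EuclideanSpace ℝ (Fin n) → ℝ) :
    Set (EuclideanSpace ℝ (Fin (n + 1))) :=
  {x | f (vproj n x) ≤ x (Fin.last n)}

section Subgradient

variable {E : Type*} [NormedAddCommGroup E] [InnerProductSpace ℝ E]

theorem norm_le_of_subgradient_of_lipschitz {f : E → ℝ} {L : ℝ} (hL : 0 ≤ L)
    (hlip : ∀ y y', |f y - f y'| ≤ L * ‖y - y'‖) {a y₀ : E}
    (hsub : ∀ y, f y₀ + ⟪a, y - y₀⟫ ≤ f y) : ‖a‖ ≤ L := by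
  have hgrow : ‖a‖ * ‖a‖ ≤ L * ‖a‖ := by
    have h₁ := hsub (y₀ + a)
    have h₂ := (abs_le.mp (hlip (y₀ + a) y₀)).2
    simp only [add_sub_cancel_left, real_inner_self_eq_norm_mul_norm] at h₁ h₂
    linarith
  rcases (norm_nonneg a).eq_or_lt with ha | ha
  · rw [← ha]; exact hL
  · exact le_of_mul_le_mul_right hgrow ha

end Subgradient

section Coordinates

variable {n : ℕ}

@[simp]
theorem vproj_add (x y : EuclideanSpace ℝ (Fin (n + 1))) :
    vproj n (x + y) = vproj n x + vproj n y := by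
  ext j; simp [vproj]

@[simp]
theorem vproj_sub (x y : EuclideanSpace ℝ (Fin (n + 1))) :
    vproj n (x - y) = vproj n x - vproj n y := by
  ext j; simp [vproj]

@[simp]
theorem vproj_smul (c : ℝ) (x : EuclideanSpace ℝ (Fin (n + 1))) :
    vproj n (c • x) = c • vproj n x := by
  ext j; simp [vproj]

@[simp]
theorem vproj_vlift (y : EuclideanSpace ℝ (Fin n)) (t : ℝ) : vproj n (vlift n y t) = y := by
  ext j; simp [vproj, vlift]

@[simp]
theorem vlift_last (y : EuclideanSpace ℝ (Fin n)) (t : ℝ) : vlift n y t (Fin.last n) = t := by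
  simp [vlift]

@[simp]
theorem vproj_ed : vproj n (ed n) = 0 := by
  ext j; simp [vproj, ed]

@[simp]
theorem ed_last : ed n (Fin.last n) = 1 := by
  simp [ed]

@[simp]
theorem vlift_mem_epigraphSet_iff {f : EuclideanSpace ℝ (Fin n) → ℝ}
    {y : EuclideanSpace ℝ (Fin n)} {t : ℝ} : vlift n y t ∈ epigraphSet n f ↔ f y ≤ t := by
  simp [epigraphSet]

theorem inner_eq_inner_vproj_add_mul_last (u x : EuclideanSpace ℝ (Fin (n + 1))) :
    ⟪u, x⟫ = ⟪vproj n u, vproj n x⟫ + u (Fin.last n) * x (Fin.last n) := by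
  simp [PiLp.inner_apply, Fin.sum_univ_castSucc, vproj, mul_comm]

/-- Off the vertical direction, the level sets of `⟪u, ·⟫` are graphs of affine functions
of slope `a = -(u_d)⁻¹ π(u)`. -/
theorem inner_sub_inner_eq_mul_last (u x q : EuclideanSpace ℝ (Fin (n + 1)))
    (hc : u (Fin.last n) ≠ 0) :
    ⟪u, x⟫ - ⟪u, q⟫ = u (Fin.last n) * (x (Fin.last n) - q (Fin.last n)
      - ⟪-(u (Fin.last n))⁻¹ • vproj n u, vproj n x - vproj n q⟫) := by
  rw [inner_eq_inner_vproj_add_mul_last u x, inner_eq_inner_vproj_add_mul_last u q,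
    real_inner_smul_left, inner_sub_right]
  field_simp
  ring

end Coordinates

section SupportingHyperplane

variable {n : ℕ} {f : EuclideanSpace ℝ (Fin n) → ℝ} {qhat : EuclideanSpace ℝ (Fin n)}
  {u : EuclideanSpace ℝ (Fin (n + 1))} {b : ℝ}

theorem last_neg_of_supporting (hu : u ≠ 0) (hq : ⟪u, vlift n qhat (f qhat)⟫ = b)
    (hle : ∀ x ∈ epigraphSet n f, ⟪u, x⟫ ≤ b) : u (Fin.last n) < 0 := by
  have hsup : ∀ y t, f y ≤ t → ⟪vproj n u, y⟫ + u (Fin.last n) * t ≤ b := fun y t h => by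
    simpa [inner_eq_inner_vproj_add_mul_last u] using hle _ (vlift_mem_epigraphSet_iff.mpr h)
  have hb : ⟪vproj n u, qhat⟫ + u (Fin.last n) * f qhat = b := by
    simpa [inner_eq_inner_vproj_add_mul_last u] using hq
  refine lt_of_le_of_ne ?_ fun hc => hu ?_
  · linarith [hsup qhat (f qhat + 1) (by linarith)]
  · have hvproj : vproj n u = 0 := by
      have h := hsup (qhat + vproj n u) _ le_rfl
      rw [hc, inner_add_right] at h
      rw [hc] at hb
      exact real_inner_self_nonpos.mp (by linarith)
    ext i
    induction i using Fin.lastCases with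
    | last => exact hc
    | cast j => simpa [vproj] using congrArg (· j) hvproj

theorem exists_subgradient_of_supporting (hu : u ≠ 0) (hq : ⟪u, vlift n qhat (f qhat)⟫ = b)
    (hle : ∀ x ∈ epigraphSet n f, ⟪u, x⟫ ≤ b) :
    ∃ a : EuclideanSpace ℝ (Fin n), (∀ y, f qhat + ⟪a, y - qhat⟫ ≤ f y) ∧
      ∀ x, ⟪u, x⟫ = b ↔ x (Fin.last n) = f qhat + ⟪a, vproj n x - qhat⟫ := by
  have hc := last_neg_of_supporting hu hq hle
  have key := fun x => inner_sub_inner_eq_mul_last u x (vlift n qhat (f qhat)) hc.ne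
  simp only [hq, vlift_last, vproj_vlift] at key
  refine ⟨-(u (Fin.last n))⁻¹ • vproj n u, fun y => ?_, fun x => ?_⟩
  · have h := hle _ (vlift_mem_epigraphSet_iff.mpr le_rfl : vlift n y (f y) ∈ _)
    have := key (vlift n y (f y))
    simp only [vlift_last, vproj_vlift] at this
    nlinarith
  · rw [← sub_eq_zero, key x, mul_eq_zero, sub_sub, sub_eq_zero]
    simp [hc.ne]

end SupportingHyperplane

section Cap

variable {n : ℕ} {L : ℝ} {f : EuclideanSpace ℝ (Fin n) → ℝ} {qhat : EuclideanSpace ℝ (Fin n)}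
  {ε : ℝ}

/-- The ray from `p = (q̂, f q̂ - ε)` through `x` meets the epigraph at `z = p + t (x - p)`,
`t = ε / (ε - 2 L r)`, so `x` lies on the segment from `p` to `z`. -/
theorem mem_convexHull_epigraphSet_union_of_norm_lt (hL : 0 < L)
    (hlip : ∀ y y', |f y - f y'| ≤ L * ‖y - y'‖) (hε : 0 < ε)
    {x : EuclideanSpace ℝ (Fin (n + 1))}
    (hlow : f qhat - L * ‖vproj n x - qhat‖ ≤ x (Fin.last n))
    (hr : ‖vproj n x - qhat‖ < ε / (2 * L)) :
    x ∈ convexHull ℝ (epigraphSet n f ∪ {vlift n qhat (f qhat) - ε • ed n}) := by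
  set r := ‖vproj n x - qhat‖
  set p := vlift n qhat (f qhat) - ε • ed n
  have hδ : 0 < ε - 2 * L * r := by
    rw [lt_div_iff₀ (by positivity)] at hr; linarith
  set t := ε / (ε - 2 * L * r)
  have ht : 1 ≤ t := by
    rw [le_div_iff₀ hδ]; nlinarith [norm_nonneg (vproj n x - qhat)]
  have htδ : t * (ε - 2 * L * r) = ε := div_mul_cancel₀ ε hδ.ne'
  set z := p + t • (x - p)
  have hz : z ∈ epigraphSet n f := by
    have hzproj : vproj n z - qhat = t • (vproj n x - qhat) := by
      simp [z, p, smul_sub]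
    have hzlast : z (Fin.last n) = f qhat - ε + t * (x (Fin.last n) - f qhat + ε) := by
      simp only [z, p, PiLp.add_apply, PiLp.smul_apply, PiLp.sub_apply, vlift_last, ed_last,
        smul_eq_mul]
      ring
    have hfz : f (vproj n z) ≤ f qhat + L * (t * r) := by
      have := (abs_le.mp (hlip (vproj n z) qhat)).2
      rw [hzproj, norm_smul, Real.norm_of_nonneg (by linarith)] at this
      linarith
    show f (vproj n z) ≤ z (Fin.last n)
    nlinarith
  have hxz : x ∈ segment ℝ p z := by
    rw [segment_eq_image']
    refine ⟨t⁻¹, ⟨by positivity, inv_le_one_of_one_le₀ ht⟩, ?_⟩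
    simp only [z, add_sub_cancel_left, smul_smul, inv_mul_cancel₀ (by positivity : t ≠ 0),
      one_smul, add_sub_cancel]
  have hp : p ∈ convexHull ℝ (epigraphSet n f ∪ {p}) := subset_convexHull ℝ _ (Or.inr rfl)
  exact (convex_convexHull ℝ _).segment_subset hp (subset_convexHull ℝ _ (Or.inl hz)) hxz

theorem mem_closure_convexHull_epigraphSet_union_of_norm_le (hL : 0 < L)
    (hlip : ∀ y y', |f y - f y'| ≤ L * ‖y - y'‖) (hε : 0 < ε)
    {a : EuclideanSpace ℝ (Fin n)} (ha : ‖a‖ ≤ L) {x : EuclideanSpace ℝ (Fin (n + 1))}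
    (hx : x (Fin.last n) = f qhat + ⟪a, vproj n x - qhat⟫)
    (hr : ‖vproj n x - qhat‖ ≤ ε / (2 * L)) :
    x ∈ closure (convexHull ℝ (epigraphSet n f ∪ {vlift n qhat (f qhat) - ε • ed n})) := by
  set q := vlift n qhat (f qhat)
  suffices h : openSegment ℝ q x ⊆ convexHull ℝ (epigraphSet n f ∪ {q - ε • ed n}) from
    closure_mono h (segment_subset_closure_openSegment (right_mem_segment ℝ q x))
  rw [openSegment_eq_image']
  rintro _ ⟨θ, ⟨hθ₀, hθ₁⟩, rfl⟩
  have hproj : vproj n (q + θ • (x - q)) - qhat = θ • (vproj n x - qhat) := by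
    simp [q]
  refine mem_convexHull_epigraphSet_union_of_norm_lt hL hlip hε ?_ ?_ <;>
    rw [hproj, norm_smul, Real.norm_of_nonneg hθ₀.le]
  · have hcs := neg_le_of_abs_le ((abs_real_inner_le_norm a (vproj n x - qhat)).trans
      (mul_le_mul_of_nonneg_right ha (norm_nonneg _)))
    simp only [q, PiLp.add_apply, PiLp.smul_apply, PiLp.sub_apply, vlift_last, hx, smul_eq_mul]
    nlinarith
  · have hrad : 0 < ε / (2 * L) := by positivity
    nlinarith [norm_nonneg (vproj n x - qhat)]

end Cap

theorem dual_cap_base_contains_ball_general (n : ℕ) (L : ℝ) (hL : 0 < L)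
    (f : EuclideanSpace ℝ (Fin n) → ℝ)
    (hlip : ∀ y y' : EuclideanSpace ℝ (Fin n), |f y - f y'| ≤ L * ‖y - y'‖)
    (qhat : EuclideanSpace ℝ (Fin n)) (ε : ℝ) (hε : 0 < ε)
    (u : EuclideanSpace ℝ (Fin (n + 1))) (hu : u ≠ 0) (b : ℝ)
    (hqmem : ⟪u, vlift n qhat (f qhat)⟫ = b)
    (hside : (∀ x ∈ epigraphSet n f, ⟪u, x⟫ ≤ b) ∨ (∀ x ∈ epigraphSet n f, b ≤ ⟪u, x⟫)) :
    (∀ x : EuclideanSpace ℝ (Fin (n + 1)), ⟪u, x⟫ = b →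
      dist (vproj n x) qhat ≤ ε / (2 * L) →
      x ∈ closure (convexHull ℝ
            (epigraphSet n f ∪ {vlift n qhat (f qhat) - ε • ed n}))) ∧
    closedBall qhat (ε / (2 * L)) ⊆
      vproj n '' ({x | ⟪u, x⟫ = b} ∩
        closure (convexHull ℝ
          (epigraphSet n f ∪ {vlift n qhat (f qhat) - ε • ed n}))) := by
  obtain ⟨a, hsub, hgraph⟩ : ∃ a : EuclideanSpace ℝ (Fin n), (∀ y, f qhat + ⟪a, y - qhat⟫ ≤ f y) ∧
      ∀ x, ⟪u, x⟫ = b ↔ x (Fin.last n) = f qhat + ⟪a, vproj n x - qhat⟫ := by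
    rcases hside with hle | hge
    · exact exists_subgradient_of_supporting hu hqmem hle
    · obtain ⟨a, hsub, hgraph⟩ := exists_subgradient_of_supporting (neg_ne_zero.mpr hu)
        (by rw [inner_neg_left, hqmem]) fun x hx => by rw [inner_neg_left]; linarith [hge x hx]
      exact ⟨a, hsub, fun x => by rw [← hgraph, inner_neg_left, neg_inj]⟩
  have ha := norm_le_of_subgradient_of_lipschitz hL.le hlip hsub
  have hcap : ∀ x, ⟪u, x⟫ = b → dist (vproj n x) qhat ≤ ε / (2 * L) →
      x ∈ closure (convexHull ℝ (epigraphSet n f ∪ {vlift n qhat (f qhat) - ε • ed n})) :=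
    fun x hx hr => mem_closure_convexHull_epigraphSet_union_of_norm_le hL hlip hε ha
      ((hgraph x).mp hx) (by rwa [← dist_eq_norm])
  refine ⟨hcap, fun y hy => ?_⟩
  have hx : ⟪u, vlift n y (f qhat + ⟪a, y - qhat⟫)⟫ = b := by simp [hgraph]
  exact ⟨_, ⟨hx, hcap _ hx (by simpa using hy)⟩, vproj_vlift y _⟩

/-- for the epigraph `U` of a convex `L`-Lipschitz function `f`, a boundary
point `q = (q̂, f(q̂))` and a supporting hyperplane `h` of `U` at `q`, every point of `h`
whose vertical projection is within distance `ε/(2L)` of `q̂` lies in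
`closure(conv(U ∪ {q − ε e_d}))`; in particular the closed ball of radius `ε/(2L)` around
`q̂` is contained in the projection of `h ∩ closure(conv(U ∪ {q − ε e_d}))`. -/
theorem dual_cap_base_contains_ball (n : ℕ) (hn : 1 ≤ n) (L : ℝ) (hL : 0 < L)
    (f : EuclideanSpace ℝ (Fin n) → ℝ) (hconv : ConvexOn ℝ Set.univ f)
    (hlip : ∀ y y' : EuclideanSpace ℝ (Fin n), |f y - f y'| ≤ L * ‖y - y'‖)
    (qhat : EuclideanSpace ℝ (Fin n)) (ε : ℝ) (hε : 0 < ε)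
    (u : EuclideanSpace ℝ (Fin (n + 1))) (hu : u ≠ 0) (b : ℝ)
    (hqmem : ⟪u, vlift n qhat (f qhat)⟫ = b)
    (hside : (∀ x ∈ epigraphSet n f, ⟪u, x⟫ ≤ b) ∨ (∀ x ∈ epigraphSet n f, b ≤ ⟪u, x⟫)) :
    (∀ x : EuclideanSpace ℝ (Fin (n + 1)), ⟪u, x⟫ = b →
      dist (vproj n x) qhat ≤ ε / (2 * L) →
      x ∈ closure (convexHull ℝ
            (epigraphSet n f ∪ {vlift n qhat (f qhat) - ε • ed n}))) ∧
    closedBall qhat (ε / (2 * L)) ⊆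
      vproj n '' ({x | ⟪u, x⟫ = b} ∩
        closure (convexHull ℝ
          (epigraphSet n f ∪ {vlift n qhat (f qhat) - ε • ed n}))) :=
  dual_cap_base_contains_ball_general n L hL f hlip qhat ε hε u hu b hqmem hside

end
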